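/- arXiv:1803.01268 — 4 statements merged into one kernel-verified Lean document; each statement's English description precedes it below -/
import Mathlib

section
/- For every integer m ≥ 2, the alternating sum over n from 2 to m of ((-1)^n / n) times the number of ordered set partitions of {1,...,m} into n nonempty disjoint blocks equals 1. -/
/-!
Recording for each point the index of its block identifies ordered set partitions into `n`
blocks with surjections `Fin m → Fin n`. Splitting a surjection `f : Fin (m+1) → Fin (n+1)`
as `Fin.cons (f 0) g`, the tail `g` is either surjective or a surjection onto the complement
of `f 0`; this gives `c(m+1,n+1) = (n+1) (c(m,n+1) + c(m,n))`, so there are `n! S(m,n)` of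
them. With `G(n) = (-1)^n n! S(m-1,n)`, the recurrence of `S` turns the `n`-th summand
`(-1)^n (n-1)! S(m,n)` into `G(n) - G(n-1)`, and the sum telescopes to
`G(m) - G(1) = 0 - (-1) = 1`.
-/

open scoped Classical in
/-- The number of ordered set partitions of `{1,...,m}` (modeled as `Fin m`)
into `n` nonempty pairwise disjoint blocks whose union is everything. -/
noncomputable def orderedSetPartitionCount (m n : ℕ) : ℕ :=
  Finset.card <| (Finset.univ : Finset (Fin n → Finset (Fin m))).filter
    (fun P => (∀ s, P s ≠ ∅) ∧ (∀ s t, s ≠ t → Disjoint (P s) (P t)) ∧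
      Finset.univ.biUnion P = Finset.univ)

open Finset Function Nat

theorem card_surjective_eq_card_orderedPartition {α β : Type*} [Fintype α] [DecidableEq α]
    [Fintype β] [DecidableEq β] :
    Nat.card {f : α → β // Surjective f} =
      Nat.card {P : β → Finset α // (∀ s, P s ≠ ∅) ∧
        (∀ s t, s ≠ t → Disjoint (P s) (P t)) ∧ univ.biUnion P = univ} := by
  refine Nat.card_congr (Equiv.ofBijective
    (fun f => ⟨fun s => univ.filter (f.1 · = s), ?_⟩) ⟨?_, ?_⟩)
  · refine ⟨fun s => ?_, fun s t hst => ?_, ?_⟩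
    · obtain ⟨i, hi⟩ := f.2 s
      exact ne_empty_of_mem (mem_filter.mpr ⟨mem_univ i, hi⟩)
    · exact disjoint_filter.mpr fun i _ his hit => hst (his.symm.trans hit)
    · exact eq_univ_of_forall fun i => mem_biUnion.mpr ⟨f.1 i, mem_univ _, by simp⟩
  · intro f g hfg
    ext1; funext i
    have hfiber : univ.filter (f.1 · = f.1 i) = univ.filter (g.1 · = f.1 i) :=
      congrFun (congrArg Subtype.val hfg) (f.1 i)
    simpa [eq_comm] using hfiber.subset (mem_filter.mpr ⟨mem_univ i, rfl⟩)
  · rintro ⟨P, hne, hdisj, hcover⟩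
    have block_unique : ∀ {i s t}, i ∈ P s → i ∈ P t → s = t := fun hs ht =>
      by_contra fun hst => disjoint_left.mp (hdisj _ _ hst) hs ht
    have hmem : ∀ i, ∃ s, i ∈ P s := fun i => by
      simpa using hcover.ge (mem_univ i)
    choose f hf using hmem
    refine ⟨⟨f, fun s => ?_⟩, Subtype.ext (funext fun s => ?_)⟩
    · obtain ⟨i, hi⟩ := nonempty_iff_ne_empty.mpr (hne s)
      exact ⟨i, block_unique (hf i) hi⟩
    · ext i
      simp only [mem_filter, mem_univ, true_and]
      exact ⟨fun h => h ▸ hf i, block_unique (hf i)⟩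

theorem card_range_eq_range_embedding {α β γ : Type*} (e : β ↪ γ) :
    Nat.card {g : α → γ // Set.range g = Set.range e} =
      Nat.card {h : α → β // Surjective h} := by
  refine (Nat.card_congr (Equiv.ofBijective
    (fun h => ⟨e ∘ h.1, by rw [Set.range_comp, h.2.range_eq, Set.image_univ]⟩)
    ⟨fun h h' hh => Subtype.ext (e.injective.comp_left (congrArg Subtype.val hh)), ?_⟩)).symm
  rintro ⟨g, hg⟩
  have hmem : ∀ a, ∃ b, e b = g a := fun a => hg.le (Set.mem_range_self a)
  choose h hh using hmem
  refine ⟨⟨h, fun b => ?_⟩, Subtype.ext (funext hh)⟩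
  obtain ⟨a, ha⟩ := hg.ge (Set.mem_range_self b)
  exact ⟨a, e.injective ((hh a).trans ha)⟩

theorem Fin.surjective_cons_iff {α : Type*} {m : ℕ} (a : α) (g : Fin m → α) :
    Surjective (Fin.cons a g : Fin (m + 1) → α) ↔ Surjective g ∨ Set.range g = {a}ᶜ := by
  rw [← Set.range_eq_univ, ← Set.range_eq_univ, Fin.range_cons, Set.insert_eq,
    ← Set.compl_subset_iff_union, Set.compl_subset_comm, Set.subset_singleton_iff_eq,
    Set.compl_empty_iff, compl_eq_comm]
  exact or_congr_right eq_comm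

theorem card_surjective_fin_succ_succ (m n : ℕ) :
    Nat.card {f : Fin (m + 1) → Fin (n + 1) // Surjective f} =
      (n + 1) * (Nat.card {g : Fin m → Fin (n + 1) // Surjective g} +
        Nat.card {h : Fin m → Fin n // Surjective h}) := by
  classical
  calc _ = Nat.card (Σ a : Fin (n + 1),
        {g : Fin m → Fin (n + 1) // Surjective (Fin.cons a g : Fin (m + 1) → Fin (n + 1))}) :=
        Nat.card_congr (((Fin.consEquiv _).subtypeEquiv fun _ => Iff.rfl).symm.trans
          (Equiv.subtypeProdEquivSigmaSubtype fun a g => Surjective (Fin.cons a g)))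
    _ = ∑ _a : Fin (n + 1), (Nat.card {g : Fin m → Fin (n + 1) // Surjective g} +
        Nat.card {h : Fin m → Fin n // Surjective h}) := by
      rw [Nat.card_sigma]
      refine Finset.sum_congr rfl fun a _ => ?_
      have hdisj : Disjoint (fun g : Fin m → Fin (n + 1) => Surjective g)
          (fun g => Set.range g = {a}ᶜ) := by
        simp only [Pi.disjoint_iff, Prop.disjoint_iff, not_and]
        intro g hg hrange
        exact Set.compl_ne_univ.mpr (Set.singleton_nonempty a) (hrange ▸ hg.range_eq)
      rw [Nat.card_congr (Equiv.subtypeEquivRight fun g => Fin.surjective_cons_iff a g),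
        Nat.card_congr (subtypeOrEquiv _ _ hdisj), Nat.card_sum,
        ← card_range_eq_range_embedding (Fin.succAboveEmb a)]
      simp
    _ = _ := by simp

theorem card_surjective_fin_eq_factorial_mul_stirlingSecond (m n : ℕ) :
    Nat.card {f : Fin m → Fin n // Surjective f} = n ! * stirlingSecond m n := by
  induction m generalizing n with
  | zero =>
    cases n with
    | zero =>
      rw [stirlingSecond_zero, factorial_zero, Nat.card_eq_one_iff_exists]
      exact ⟨⟨finZeroElim, fun b => b.elim0⟩,
        fun f => Subtype.ext (funext fun i => i.elim0)⟩
    | succ n =>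
      rw [stirlingSecond_zero_succ, mul_zero, Nat.card_eq_zero]
      exact Or.inl ⟨fun f => by simpa using Fintype.card_le_of_surjective f.1 f.2⟩
  | succ m ih =>
    cases n with
    | zero => simp
    | succ n =>
      rw [card_surjective_fin_succ_succ, ih, ih, stirlingSecond_succ_succ, factorial_succ]
      ring

theorem orderedSetPartitionCount_eq_factorial_mul_stirlingSecond (m n : ℕ) :
    orderedSetPartitionCount m n = n ! * stirlingSecond m n := by
  rw [orderedSetPartitionCount, ← Fintype.card_subtype, ← Nat.card_eq_fintype_card,
    ← card_surjective_eq_card_orderedPartition,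
    card_surjective_fin_eq_factorial_mul_stirlingSecond]

theorem Nat.sum_Icc_neg_one_pow_mul_factorial_pred_mul_stirlingSecond {m : ℕ} (hm : 2 ≤ m) :
    ∑ n ∈ Icc 2 m, (-1 : ℤ) ^ n * (n - 1)! * stirlingSecond m n = 1 := by
  obtain ⟨M, rfl⟩ : ∃ M, m = M + 1 + 1 := ⟨m - 2, by omega⟩
  set G : ℕ → ℤ := fun k => (-1) ^ k * k ! * stirlingSecond (M + 1) k
  have htelescope : ∀ k, (-1 : ℤ) ^ (k + 1) * k ! * stirlingSecond (M + 1 + 1) (k + 1) =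
      G (k + 1) - G k := by
    intro k
    simp only [G, stirlingSecond_succ_succ, factorial_succ]
    push_cast
    ring
  have hIcc : Icc 2 (M + 1 + 1) = Ico (1 + 1) (M + 1 + 1 + 1) := by
    ext; simp
  rw [hIcc, ← sum_Ico_add']
  simp only [add_tsub_cancel_right, htelescope]
  rw [sum_Ico_sub G (by omega)]
  simp only [G]
  rw [stirlingSecond_eq_zero_of_lt (by omega), stirlingSecond_one_right]
  norm_num

theorem stmt0 (m : ℕ) (hm : 2 ≤ m) :
    ∑ n ∈ Finset.Icc 2 m, ((-1 : ℚ) ^ n / n) * (orderedSetPartitionCount m n : ℚ) = 1 := by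
  have hterm : ∀ n ∈ Icc 2 m, ((-1 : ℚ) ^ n / n) * (orderedSetPartitionCount m n : ℚ) =
      (((-1 : ℤ) ^ n * (n - 1)! * stirlingSecond m n : ℤ) : ℚ) := by
    intro n hn
    have hn0 : n ≠ 0 := by grind
    rw [orderedSetPartitionCount_eq_factorial_mul_stirlingSecond, ← Nat.mul_factorial_pred hn0]
    push_cast
    field_simp
  rw [sum_congr rfl hterm, ← Int.cast_sum,
    Nat.sum_Icc_neg_one_pow_mul_factorial_pred_mul_stirlingSecond hm, Int.cast_one]
end

section
/- For every integer m ≥ 2, the sum over all partitions λ of m with at least 2 parts of ((-1)^{ℓ(λ)} / ℓ(λ)) · ℓ(λ)! · m! / (λ_1! ⋯ λ_{ℓ(λ)}! · |Aut(λ)|) equals 1. -/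
/-- `|Aut(λ)| = ∏ i, m_i(λ)!` where `m_i(λ)` is the number of parts of `λ` equal to `i`. -/
def partitionAut {m : ℕ} (p : Nat.Partition m) : ℕ :=
  ∏ i ∈ p.parts.toFinset, (p.parts.count i).factorial

/-- The product `λ_1! ⋯ λ_{ℓ(λ)}!` of the factorials of the parts of `λ`. -/
def partitionFactProd {m : ℕ} (p : Nat.Partition m) : ℕ :=
  (p.parts.map Nat.factorial).prod

namespace Stmt4Aux

open Finset PowerSeries

/-! ### Finite differences -/

lemma fwdDiff_pow_eq_zero : ∀ n e, e < n →
    (fwdDiff 1)^[n] (fun x : ℕ ↦ (x : ℚ) ^ e) = 0 := by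
  intro n
  induction n using Nat.strong_induction_on with
  | _ n ih =>
    intro e he
    obtain ⟨n, rfl⟩ : ∃ n', n = n' + 1 := ⟨n - 1, by omega⟩
    rw [Function.iterate_succ_apply]
    have hΔ : fwdDiff 1 (fun x : ℕ ↦ (x : ℚ) ^ e)
        = ∑ j ∈ range e, fun x : ℕ ↦ ((e.choose j : ℚ)) * (x : ℚ) ^ j := by
      funext x
      simp only [fwdDiff, Finset.sum_apply]
      push_cast
      rw [add_pow]
      rw [Finset.sum_range_succ]
      simp [mul_comm]
    rw [hΔ, fwdDiff_iter_finset_sum]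
    have : ∀ j ∈ range e, (fwdDiff 1)^[n] (fun x : ℕ ↦ (e.choose j : ℚ) * (x:ℚ) ^ j) = 0 := by
      intro j hj
      have : (fun x : ℕ ↦ (e.choose j : ℚ) * (x:ℚ) ^ j)
          = (e.choose j : ℚ) • (fun x : ℕ ↦ (x:ℚ) ^ j) := by
        funext x; simp
      rw [this, fwdDiff_iter_const_smul, ih n (by omega) j (by
        have := mem_range.mp hj; omega)]
      simp
    rw [Finset.sum_congr rfl this]
    simp

lemma neg_one_pow_sub (m k : ℕ) (h : k ≤ m) : ((-1:ℚ))^(m-k) = (-1:ℚ)^m * (-1:ℚ)^k := by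
  have h1 : ((-1:ℚ))^(m-k) * (-1:ℚ)^k = (-1:ℚ)^m := by
    rw [← pow_add, Nat.sub_add_cancel h]
  have h2 : ((-1:ℚ)^k) * ((-1:ℚ)^k) = 1 := by
    rw [← pow_add, ← two_mul, pow_mul]; norm_num
  calc ((-1:ℚ))^(m-k) = ((-1:ℚ))^(m-k) * (((-1:ℚ)^k) * ((-1:ℚ)^k)) := by rw [h2, mul_one]
    _ = (-1:ℚ)^m * (-1:ℚ)^k := by rw [← mul_assoc, h1]

lemma alt_sum_choose_pow (m e : ℕ) (he : e < m) :
    ∑ k ∈ range (m + 1), (-1 : ℚ) ^ k * (m.choose k : ℚ) * (k : ℚ) ^ e = 0 := by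
  have h := fwdDiff_iter_eq_sum_shift (M := ℕ) (G := ℚ) 1 (fun x : ℕ ↦ (x : ℚ) ^ e) m 0
  rw [fwdDiff_pow_eq_zero m e he] at h
  simp only [Pi.zero_apply, zero_add, smul_eq_mul, zsmul_eq_mul, smul_eq_mul, mul_one] at h
  push_cast at h
  have h2 : ∀ k ∈ range (m+1), ((-1:ℚ)^(m-k) * (m.choose k)) * (k:ℚ)^e
      = (-1:ℚ)^m * ((-1:ℚ)^k * (m.choose k) * (k:ℚ)^e) := by
    intro k hk
    have hk' := mem_range.mp hk
    rw [neg_one_pow_sub m k (by omega)]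
    ring
  rw [Finset.sum_congr rfl h2, ← Finset.mul_sum] at h
  have hne : ((-1:ℚ)^m) ≠ 0 := pow_ne_zero m (by norm_num)
  exact (mul_eq_zero.mp h.symm).resolve_left hne

/-! ### Power series -/

noncomputable def truncExpQ (m : ℕ) : PowerSeries ℚ :=
  ∑ i ∈ Icc 1 m, PowerSeries.monomial i ((i.factorial : ℚ)⁻¹)

lemma monomial_eq_C_mul_X (i : ℕ) (a : ℚ) :
    PowerSeries.monomial i a = PowerSeries.C a * (PowerSeries.X) ^ i := by
  ext n
  simp [PowerSeries.coeff_monomial, PowerSeries.coeff_C_mul, PowerSeries.coeff_X_pow]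

lemma monomial_mul_monomial' (i j : ℕ) (a b : ℚ) :
    PowerSeries.monomial i a * PowerSeries.monomial j b
      = PowerSeries.monomial (i + j) (a * b) := by
  rw [monomial_eq_C_mul_X, monomial_eq_C_mul_X, monomial_eq_C_mul_X, pow_add, map_mul]
  ring

lemma prod_map_monomial (c : ℕ → ℚ) (μ : Multiset ℕ) :
    (μ.map (fun i => PowerSeries.monomial i (c i))).prod
      = PowerSeries.monomial μ.sum (μ.map c).prod := by
  induction μ using Multiset.induction with
  | empty =>
    simp only [Multiset.map_zero, Multiset.prod_zero, Multiset.sum_zero]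
    rw [monomial_eq_C_mul_X]
    simp
  | cons a s ih =>
    simp only [Multiset.map_cons, Multiset.prod_cons, Multiset.sum_cons, ih,
      monomial_mul_monomial']

lemma coeff_truncExpQ_pow (m k : ℕ) :
    coeff m ((truncExpQ m) ^ k)
      = ∑ μ ∈ ((Icc 1 m).sym k).filter (fun μ : Sym ℕ k => Multiset.sum ↑μ = m),
          (Multiset.countPerms (↑μ : Multiset ℕ) : ℚ)
            * ((↑μ : Multiset ℕ).map (fun i => (i.factorial : ℚ)⁻¹)).prod := by
  rw [truncExpQ, Finset.sum_pow, map_sum, Finset.sum_filter]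
  apply Finset.sum_congr rfl
  intro μ hμ
  rw [prod_map_monomial, ← nsmul_eq_mul, map_nsmul, PowerSeries.coeff_monomial]
  split_ifs with h1 h2 h3 <;>
    first
      | exact nsmul_eq_mul _ _
      | exact absurd h1.symm h2
      | exact absurd h3.symm h1
      | exact smul_zero _

lemma coeff_truncExpQ (m n : ℕ) (hn : n ≤ m) :
    coeff n (truncExpQ m) = coeff n (PowerSeries.exp ℚ - 1) := by
  rw [truncExpQ, map_sum, map_sub, PowerSeries.coeff_exp]
  have : ∀ i ∈ Icc 1 m, coeff n (PowerSeries.monomial i ((i.factorial : ℚ)⁻¹))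
      = if i = n then (n.factorial : ℚ)⁻¹ else 0 := by
    intro i hi
    rw [PowerSeries.coeff_monomial]
    rcases eq_or_ne i n with h | h
    · subst h; simp
    · rw [if_neg (Ne.symm h), if_neg h]
  rw [Finset.sum_congr rfl this, Finset.sum_ite_eq' (Icc 1 m) n (fun _ => (n.factorial:ℚ)⁻¹)]
  rcases Nat.eq_zero_or_pos n with h0 | h0
  · subst h0
    simp
  · rw [if_pos (by rw [mem_Icc]; omega)]
    have : (coeff n) (1 : PowerSeries ℚ) = 0 := by
      rw [← map_one (PowerSeries.C (R := ℚ)), PowerSeries.coeff_C, if_neg (by omega)]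
    rw [this, sub_zero]
    simp [div_eq_mul_inv]

lemma coeff_pow_congr (m : ℕ) (A B : PowerSeries ℚ)
    (h : ∀ n ≤ m, coeff n A = coeff n B) (k : ℕ) :
    ∀ n ≤ m, coeff n (A ^ k) = coeff n (B ^ k) := by
  induction k with
  | zero => simp
  | succ k ih =>
    intro n hn
    rw [pow_succ, pow_succ, coeff_mul, coeff_mul]
    apply Finset.sum_congr rfl
    intro x hx
    rw [Finset.HasAntidiagonal.mem_antidiagonal] at hx
    rw [ih x.1 (by omega), h x.2 (by omega)]

lemma coeff_exp_sub_one_pow (m k : ℕ) :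
    coeff m ((PowerSeries.exp ℚ - 1) ^ k)
      = ∑ j ∈ range (k + 1), (-1:ℚ)^(k-j) * (k.choose j : ℚ) * (j:ℚ)^m / (m.factorial : ℚ) := by
  rw [sub_pow]
  rw [map_sum]
  apply Finset.sum_congr rfl
  intro j hj
  rw [one_pow]
  have hexp : (PowerSeries.exp ℚ) ^ j = rescale (j : ℚ) (PowerSeries.exp ℚ) :=
    PowerSeries.exp_pow_eq_rescale_exp j
  have hco : coeff m ((PowerSeries.exp ℚ)^j) = (j:ℚ)^m / (m.factorial : ℚ) := by
    rw [hexp, coeff_rescale, coeff_exp]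
    simp [div_eq_mul_inv]
  have hj' := Finset.mem_range.mp hj
  have hterm : ((-1 : PowerSeries ℚ))^(j+k) * PowerSeries.exp ℚ ^ j * 1 * ((k.choose j : ℕ) : PowerSeries ℚ)
      = PowerSeries.C ((-1:ℚ)^(j+k) * (k.choose j : ℚ)) * PowerSeries.exp ℚ ^ j := by
    simp only [map_mul, map_pow, map_neg, map_one, map_natCast, mul_one]
    ring
  rw [hterm, PowerSeries.coeff_C_mul, hco]
  have hsgn : ((-1:ℚ))^(j+k) = (-1:ℚ)^(k-j) := by
    have h1 : ((-1:ℚ))^(j+k) = (-1:ℚ)^j * (-1:ℚ)^k := by rw [pow_add]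
    rw [neg_one_pow_sub k j (by omega), h1]
    ring
  rw [hsgn]; ring

/-! ### Partitions -/

lemma mem_Icc_of_mem_parts {m : ℕ} (p : Nat.Partition m) {a : ℕ}
    (ha : a ∈ p.parts) : a ∈ Icc 1 m := by
  rw [mem_Icc]
  constructor
  · exact p.parts_pos ha
  · calc a ≤ p.parts.sum := Multiset.single_le_sum (fun x _ => Nat.zero_le x) a ha
      _ = m := p.parts_sum

lemma sym_sum_eq_partition_sum (m k : ℕ) (f : Multiset ℕ → ℚ) :
    ∑ μ ∈ ((Icc 1 m).sym k).filter (fun μ : Sym ℕ k => Multiset.sum ↑μ = m), f ↑μ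
      = ∑ p ∈ (univ : Finset (Nat.Partition m)).filter (fun p => Multiset.card p.parts = k),
          f p.parts := by
  refine Finset.sum_bij'
    (i := fun μ hμ => ⟨↑μ,
      fun {a} ha => by
        have h1 := (Finset.mem_filter.mp hμ).1
        have := (Finset.mem_sym_iff.mp h1) a ha
        exact (Finset.mem_Icc.mp this).1,
      (Finset.mem_filter.mp hμ).2⟩)
    (j := fun p hp => Sym.mk p.parts (Finset.mem_filter.mp hp).2)
    ?_ ?_ ?_ ?_ ?_
  · intro μ hμ
    simp only [Finset.mem_filter, Finset.mem_univ, true_and]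
    exact μ.2
  · intro p hp
    simp only [Finset.mem_filter]
    constructor
    · rw [Finset.mem_sym_iff]
      intro a ha
      exact mem_Icc_of_mem_parts p ha
    · exact p.parts_sum
  · intro μ hμ
    exact Subtype.ext rfl
  · intro p hp
    rfl
  · intro μ hμ
    rfl

lemma aut_mul_multinomial {m : ℕ} (p : Nat.Partition m) :
    partitionAut p * Multiset.countPerms p.parts = (Multiset.card p.parts).factorial := by
  rw [Multiset.countPerms, Finsupp.multinomial_eq]
  have hspec := Nat.multinomial_spec (p.parts.toFinsupp).support (p.parts.toFinsupp)
  simp only [Multiset.toFinsupp_support, Multiset.toFinsupp_apply] at hspec ⊢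
  rw [show partitionAut p = ∏ i ∈ p.parts.toFinset, (p.parts.count i).factorial from rfl]
  rw [hspec, Multiset.toFinset_sum_count_eq]

lemma prod_map_inv_factorial {m : ℕ} (p : Nat.Partition m) :
    ((p.parts).map (fun i => ((i.factorial : ℚ))⁻¹)).prod = ((partitionFactProd p : ℚ))⁻¹ := by
  rw [partitionFactProd]
  induction p.parts using Multiset.induction with
  | empty => simp
  | cons a s ih =>
    simp only [Multiset.map_cons, Multiset.prod_cons, ih]
    push_cast
    rw [mul_inv]

lemma card_le_of_partition {m : ℕ} (p : Nat.Partition m) : Multiset.card p.parts ≤ m := by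
  have h := Multiset.card_nsmul_le_sum (s := p.parts) (a := 1) (fun x hx => p.parts_pos hx)
  rw [p.parts_sum, smul_eq_mul, mul_one] at h
  exact h

lemma one_le_card {m : ℕ} (hm : m ≠ 0) (p : Nat.Partition m) : 1 ≤ Multiset.card p.parts := by
  rcases Nat.eq_zero_or_pos (Multiset.card p.parts) with h | h
  · exfalso
    have h0 : p.parts = 0 := Multiset.card_eq_zero.mp h
    have := p.parts_sum
    rw [h0] at this
    simp at this
    exact hm this.symm
  · exact h

/-- The key identity: the sum over partitions with `k` parts of `multinomial / ∏ i!`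
equals the `m`-th coefficient of `(e^X - 1)^k`. -/
lemma partition_sum_eq_coeff (m k : ℕ) :
    ∑ p ∈ (univ : Finset (Nat.Partition m)).filter (fun p => Multiset.card p.parts = k),
        (Multiset.countPerms p.parts : ℚ) * ((partitionFactProd p : ℚ))⁻¹
      = coeff m ((PowerSeries.exp ℚ - 1) ^ k) := by
  rw [← coeff_pow_congr m (truncExpQ m) (PowerSeries.exp ℚ - 1)
    (fun n hn => coeff_truncExpQ m n hn) k m le_rfl]
  rw [coeff_truncExpQ_pow]
  rw [sym_sum_eq_partition_sum m k
    (fun s => (Multiset.countPerms s : ℚ) * (s.map (fun i => (i.factorial : ℚ)⁻¹)).prod)]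
  apply Finset.sum_congr rfl
  intro p hp
  rw [prod_map_inv_factorial]

lemma factProd_ne_zero {m : ℕ} (p : Nat.Partition m) : ((partitionFactProd p : ℚ)) ≠ 0 := by
  have : partitionFactProd p ≠ 0 := by
    rw [partitionFactProd]
    have : 0 < (p.parts.map Nat.factorial).prod := by
      apply Multiset.prod_pos
      intro x hx
      rcases Multiset.mem_map.mp hx with ⟨a, _, ha⟩
      rw [← ha]
      exact Nat.factorial_pos a
    omega
  exact_mod_cast this

lemma aut_ne_zero {m : ℕ} (p : Nat.Partition m) : ((partitionAut p : ℚ)) ≠ 0 := by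
  have : partitionAut p ≠ 0 := by
    rw [show partitionAut p = ∏ i ∈ p.parts.toFinset, (p.parts.count i).factorial from rfl]
    exact Finset.prod_ne_zero_iff.mpr (fun a _ => Nat.factorial_ne_zero _)
  exact_mod_cast this

lemma term_eq {m : ℕ} (p : Nat.Partition m) (k : ℕ) (hk : Multiset.card p.parts = k) :
    ((-1 : ℚ) ^ (Multiset.card p.parts) / (Multiset.card p.parts : ℚ))
        * ((Multiset.card p.parts).factorial : ℚ) * (m.factorial : ℚ)
        / ((partitionFactProd p : ℚ) * (partitionAut p : ℚ))
      = ((-1:ℚ)^k / k) * (m.factorial : ℚ)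
          * ((Multiset.countPerms p.parts : ℚ) * ((partitionFactProd p : ℚ))⁻¹) := by
  subst hk
  have hfact : ((Multiset.card p.parts).factorial : ℚ)
      = (partitionAut p : ℚ) * (Multiset.countPerms p.parts : ℚ) := by
    rw [← Nat.cast_mul, aut_mul_multinomial]
  rw [hfact]
  have hne : (partitionFactProd p : ℚ) * (partitionAut p : ℚ) ≠ 0 :=
    mul_ne_zero (factProd_ne_zero p) (aut_ne_zero p)
  rw [div_eq_iff hne]
  symm
  calc ((-1:ℚ)^(Multiset.card p.parts) / (Multiset.card p.parts : ℚ)) * (m.factorial : ℚ)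
        * ((Multiset.countPerms p.parts : ℚ) * ((partitionFactProd p : ℚ))⁻¹)
        * ((partitionFactProd p : ℚ) * (partitionAut p : ℚ))
      = ((-1:ℚ)^(Multiset.card p.parts) / (Multiset.card p.parts : ℚ)) * (m.factorial : ℚ)
          * (Multiset.countPerms p.parts : ℚ) * (partitionAut p : ℚ)
          * (((partitionFactProd p : ℚ))⁻¹ * (partitionFactProd p : ℚ)) := by ring
    _ = ((-1:ℚ)^(Multiset.card p.parts) / (Multiset.card p.parts : ℚ))
          * ((partitionAut p : ℚ) * (Multiset.countPerms p.parts : ℚ)) * (m.factorial : ℚ) := by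
        rw [inv_mul_cancel₀ (factProd_ne_zero p), mul_one]; ring

lemma double_sum_zero (m : ℕ) (hm : 2 ≤ m) :
    ∑ k ∈ Icc 1 m, ∑ j ∈ range (k+1),
        (-1:ℚ)^j * (k.choose j : ℚ) * (j:ℚ)^m / (k : ℚ) = 0 := by
  have hstep1 : ∀ k ∈ Icc 1 m, ∑ j ∈ range (k+1), (-1:ℚ)^j * (k.choose j : ℚ) * (j:ℚ)^m / (k : ℚ)
      = ∑ j ∈ Ico 1 (k+1), (-1:ℚ)^j * (k.choose j : ℚ) * (j:ℚ)^m / (k : ℚ) := by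
    intro k hk
    rw [range_eq_Ico, Finset.sum_eq_sum_Ico_succ_bot (by omega)]
    rw [show ((0:ℕ):ℚ)^m = 0 from by rw [Nat.cast_zero]; exact zero_pow (by omega)]
    simp
  rw [Finset.sum_congr rfl hstep1]
  have hIcc : Icc 1 m = Ico 1 (m+1) := by rw [Finset.Ico_add_one_right_eq_Icc]
  rw [hIcc]
  rw [show (∑ k ∈ Ico 1 (m+1), ∑ j ∈ Ico 1 (k+1),
      (-1:ℚ)^j * (k.choose j : ℚ) * (j:ℚ)^m / (k : ℚ))
    = ∑ j ∈ Ico 1 (m+1), ∑ k ∈ Ico j (m+1),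
      (-1:ℚ)^j * (k.choose j : ℚ) * (j:ℚ)^m / (k : ℚ) from
    (Finset.sum_Ico_Ico_comm 1 (m+1) (fun j k => (-1:ℚ)^j * (k.choose j : ℚ) * (j:ℚ)^m / (k : ℚ))).symm]
  have hinner : ∀ j ∈ Ico 1 (m+1), ∑ k ∈ Ico j (m+1),
      (-1:ℚ)^j * (k.choose j : ℚ) * (j:ℚ)^m / (k : ℚ)
      = (-1:ℚ)^j * (m.choose j : ℚ) * (j:ℚ)^(m-1) := by
    intro j hj
    rw [mem_Ico] at hj
    have hterm : ∀ k ∈ Ico j (m+1), (-1:ℚ)^j * (k.choose j : ℚ) * (j:ℚ)^m / (k : ℚ)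
        = (-1:ℚ)^j * (j:ℚ)^(m-1) * (((k-1).choose (j-1) : ℕ) : ℚ) := by
      intro k hk
      rw [mem_Ico] at hk
      have hk1 : 1 ≤ k := by omega
      have hchoose : k * ((k-1).choose (j-1)) = (k.choose j) * j := by
        have := Nat.add_one_mul_choose_eq (k-1) (j-1)
        simpa [Nat.succ_eq_add_one, Nat.sub_add_cancel hk1,
          Nat.sub_add_cancel (show 1 ≤ j by omega)] using this
      have hkQ : ((k:ℚ)) ≠ 0 := Nat.cast_ne_zero.mpr (by omega)
      have hjQ : ((j:ℚ)) ≠ 0 := Nat.cast_ne_zero.mpr (by omega)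
      have hchooseQ : ((k:ℚ)) * (((k-1).choose (j-1) : ℕ) : ℚ) = ((k.choose j : ℕ) : ℚ) * (j:ℚ) := by
        exact_mod_cast congrArg (Nat.cast : ℕ → ℚ) hchoose
      have hpow : ((j:ℚ))^m = (j:ℚ)^(m-1) * (j:ℚ) := by
        rw [← pow_succ]
        congr 1
        omega
      rw [div_eq_iff hkQ]
      rw [hpow]
      calc (-1:ℚ)^j * (k.choose j : ℚ) * ((j:ℚ)^(m-1) * (j:ℚ))
          = (-1:ℚ)^j * (j:ℚ)^(m-1) * ((k.choose j : ℚ) * (j:ℚ)) := by ring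
        _ = (-1:ℚ)^j * (j:ℚ)^(m-1) * ((k:ℚ) * (((k-1).choose (j-1) : ℕ) : ℚ)) := by rw [hchooseQ]
        _ = (-1:ℚ)^j * (j:ℚ)^(m-1) * (((k-1).choose (j-1) : ℕ) : ℚ) * (k:ℚ) := by ring
    rw [Finset.sum_congr rfl hterm, ← Finset.mul_sum]
    have hreindex : ∑ k ∈ Ico j (m+1), (((k-1).choose (j-1) : ℕ) : ℚ)
        = ∑ t ∈ Icc (j-1) (m-1), ((t.choose (j-1) : ℕ) : ℚ) := by
      refine Finset.sum_bij' (i := fun k _ => k - 1) (j := fun t _ => t + 1) ?_ ?_ ?_ ?_ ?_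
      · intro k hk; rw [mem_Ico] at hk
        show k - 1 ∈ Icc (j-1) (m-1)
        rw [mem_Icc]; omega
      · intro t ht; rw [mem_Icc] at ht
        show t + 1 ∈ Ico j (m+1)
        rw [mem_Ico]; omega
      · intro k hk; rw [mem_Ico] at hk
        show k - 1 + 1 = k
        omega
      · intro t ht
        show t + 1 - 1 = t
        omega
      · intro k hk; rfl
    rw [hreindex]
    rw [← Nat.cast_sum, Nat.sum_Icc_choose (m-1) (j-1)]
    rw [show m - 1 + 1 = m from by omega, show j - 1 + 1 = j from by omega]
    ring
  rw [Finset.sum_congr rfl hinner]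
  have hfinal := alt_sum_choose_pow m (m-1) (by omega)
  rw [range_eq_Ico, Finset.sum_eq_sum_Ico_succ_bot (by omega : 0 < m + 1)] at hfinal
  rw [show ((0:ℕ):ℚ)^(m-1) = 0 from by rw [Nat.cast_zero]; exact zero_pow (by omega)] at hfinal
  simpa using hfinal

lemma total_sum_zero (m : ℕ) (hm : 2 ≤ m) :
    ∑ p ∈ (univ : Finset (Nat.Partition m)),
      ((-1 : ℚ) ^ (Multiset.card p.parts) / (Multiset.card p.parts : ℚ))
        * ((Multiset.card p.parts).factorial : ℚ) * (m.factorial : ℚ)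
        / ((partitionFactProd p : ℚ) * (partitionAut p : ℚ)) = 0 := by
  rw [← Finset.sum_fiberwise_of_maps_to (g := fun p : Nat.Partition m => Multiset.card p.parts)
    (t := Icc 1 m) (fun p _ => by
      rw [mem_Icc]
      exact ⟨one_le_card (by omega) p, card_le_of_partition p⟩)]
  have hfiber : ∀ k ∈ Icc 1 m,
      ∑ p ∈ (univ : Finset (Nat.Partition m)).filter (fun p => Multiset.card p.parts = k),
        ((-1 : ℚ) ^ (Multiset.card p.parts) / (Multiset.card p.parts : ℚ))
          * ((Multiset.card p.parts).factorial : ℚ) * (m.factorial : ℚ)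
          / ((partitionFactProd p : ℚ) * (partitionAut p : ℚ))
      = ∑ j ∈ range (k+1), (-1:ℚ)^j * (k.choose j : ℚ) * (j:ℚ)^m / (k : ℚ) := by
    intro k hk
    rw [mem_Icc] at hk
    have h1 : ∀ p ∈ (univ : Finset (Nat.Partition m)).filter
        (fun p => Multiset.card p.parts = k),
        ((-1 : ℚ) ^ (Multiset.card p.parts) / (Multiset.card p.parts : ℚ))
          * ((Multiset.card p.parts).factorial : ℚ) * (m.factorial : ℚ)
          / ((partitionFactProd p : ℚ) * (partitionAut p : ℚ))
        = ((-1:ℚ)^k / k) * (m.factorial : ℚ)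
            * ((Multiset.countPerms p.parts : ℚ) * ((partitionFactProd p : ℚ))⁻¹) := by
      intro p hp
      exact term_eq p k (Finset.mem_filter.mp hp).2
    rw [Finset.sum_congr rfl h1, ← Finset.mul_sum, partition_sum_eq_coeff,
      coeff_exp_sub_one_pow, Finset.mul_sum]
    apply Finset.sum_congr rfl
    intro j hj
    rw [mem_range] at hj
    have hmf : ((m.factorial : ℚ)) ≠ 0 := by
      exact_mod_cast Nat.factorial_ne_zero m
    have hsgn : (-1:ℚ)^k * (-1:ℚ)^(k-j) = (-1:ℚ)^j := by
      rw [neg_one_pow_sub k j (by omega)]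
      calc (-1:ℚ)^k * ((-1:ℚ)^k * (-1:ℚ)^j) = ((-1:ℚ)^k * (-1:ℚ)^k) * (-1:ℚ)^j := by ring
        _ = (-1:ℚ)^j := by rw [← pow_add, ← two_mul, pow_mul]; norm_num
    calc (-1:ℚ)^k / (k:ℚ) * (m.factorial : ℚ)
          * ((-1:ℚ)^(k-j) * (k.choose j : ℚ) * (j:ℚ)^m / (m.factorial : ℚ))
        = ((-1:ℚ)^k * (-1:ℚ)^(k-j)) * (k.choose j : ℚ) * (j:ℚ)^m / (k:ℚ)
            * ((m.factorial : ℚ) / (m.factorial : ℚ)) := by ring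
      _ = (-1:ℚ)^j * (k.choose j : ℚ) * (j:ℚ)^m / (k:ℚ) := by
          rw [hsgn, div_self hmf, mul_one]
  rw [Finset.sum_congr rfl hfiber]
  exact double_sum_zero m hm

end Stmt4Aux

open Finset Stmt4Aux in
theorem stmt4 (m : ℕ) (hm : 2 ≤ m) :
    ∑ p ∈ (Finset.univ : Finset (Nat.Partition m)).filter (fun p => 2 ≤ p.parts.card),
      ((-1 : ℚ) ^ p.parts.card / p.parts.card) * (p.parts.card.factorial : ℚ) *
        (m.factorial : ℚ) / ((partitionFactProd p : ℚ) * (partitionAut p : ℚ)) = 1 := by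
  have hsplit := Finset.sum_filter_add_sum_filter_not (Finset.univ : Finset (Nat.Partition m))
    (fun p => 2 ≤ Multiset.card p.parts)
    (fun p => ((-1 : ℚ) ^ (Multiset.card p.parts) / (Multiset.card p.parts : ℚ))
      * ((Multiset.card p.parts).factorial : ℚ) * (m.factorial : ℚ)
      / ((partitionFactProd p : ℚ) * (partitionAut p : ℚ)))
  rw [total_sum_zero m hm] at hsplit
  have hcompl : (Finset.univ : Finset (Nat.Partition m)).filter
      (fun p => ¬ 2 ≤ Multiset.card p.parts) = {Nat.Partition.indiscrete m} := by
    ext p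
    simp only [Finset.mem_filter, Finset.mem_univ, true_and, Finset.mem_singleton]
    constructor
    · intro h
      have hc : Multiset.card p.parts = 1 := by
        have := one_le_card (by omega : m ≠ 0) p
        omega
      rcases Multiset.card_eq_one.mp hc with ⟨a, ha⟩
      have hsum := p.parts_sum
      rw [ha] at hsum
      simp at hsum
      apply Nat.Partition.ext
      rw [ha, Nat.Partition.indiscrete_parts (by omega), hsum]
    · intro h
      subst h
      rw [Nat.Partition.indiscrete_parts (by omega)]
      simp
  rw [hcompl, Finset.sum_singleton] at hsplit
  have hval : ((-1 : ℚ) ^ (Multiset.card (Nat.Partition.indiscrete m).parts)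
      / (Multiset.card (Nat.Partition.indiscrete m).parts : ℚ))
      * ((Multiset.card (Nat.Partition.indiscrete m).parts).factorial : ℚ) * (m.factorial : ℚ)
      / ((partitionFactProd (Nat.Partition.indiscrete m) : ℚ)
        * (partitionAut (Nat.Partition.indiscrete m) : ℚ)) = -1 := by
    have hparts : (Nat.Partition.indiscrete m).parts = {m} :=
      Nat.Partition.indiscrete_parts (by omega)
    have hF : partitionFactProd (Nat.Partition.indiscrete m) = m.factorial := by
      rw [partitionFactProd, hparts]
      simp
    have hA : partitionAut (Nat.Partition.indiscrete m) = 1 := by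
      rw [show partitionAut (Nat.Partition.indiscrete m)
          = ∏ i ∈ (Nat.Partition.indiscrete m).parts.toFinset,
            ((Nat.Partition.indiscrete m).parts.count i).factorial from rfl, hparts]
      simp
    rw [hF, hA, hparts]
    have hmf : ((m.factorial : ℚ)) ≠ 0 := by exact_mod_cast Nat.factorial_ne_zero m
    simp [hmf]
  rw [hval] at hsplit
  linarith [hsplit]
end

section
/- Let L ≥ 2 and suppose H : (nonempty subsets of Fin L) → R is a function into a commutative ring R that is multiplicative over singletons, i.e., there exist elements h_α ∈ R with H(I) = ∏_{α ∈ I} h_α for every nonempty I ⊆ Fin L. Then ∑_{l=1}^{L} ((-1)^{l-1}/l) ∑_{(I_1,...,I_l)} ∏_{s=1}^{l} H(I_s) = 0, where the inner sum is over all ordered set partitions of Fin L into l nonempty blocks, and R is a ℚ-algebra. -/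
open Finset Function
open scoped Classical



noncomputable def Nsurj (L l : ℕ) : ℕ :=
  Fintype.card {f : Fin L → Fin l // Function.Surjective f}

lemma Nsurj_zero_right (L : ℕ) (hL : 1 ≤ L) : Nsurj L 0 = 0 := by
  have : IsEmpty (Fin L → Fin 0) := by
    have : Nonempty (Fin L) := ⟨⟨0, hL⟩⟩
    infer_instance
  simp [Nsurj, Fintype.card_eq_zero_iff]

lemma Nsurj_gt {L l : ℕ} (h : L < l) : Nsurj L l = 0 := by
  rw [Nsurj, Fintype.card_eq_zero_iff]
  constructor
  intro ⟨f, hf⟩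
  have := Fintype.card_le_of_surjective f hf
  simp at this
  omega


lemma surj_snoc_iff {L m : ℕ} (g : Fin L → Fin (m + 1)) (v : Fin (m + 1)) :
    Surjective (Fin.snoc g v : Fin (L + 1) → Fin (m + 1)) ↔
      Surjective g ∨ (v ∉ Set.range g ∧ ∀ y, y ≠ v → y ∈ Set.range g) := by
  have key : ∀ y, (∃ i, (Fin.snoc g v : Fin (L + 1) → Fin (m + 1)) i = y) ↔
      (y = v ∨ y ∈ Set.range g) := by
    intro y
    constructor
    · rintro ⟨i, hi⟩
      rcases Fin.eq_castSucc_or_eq_last i with ⟨j, rfl⟩ | rfl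
      · rw [Fin.snoc_castSucc] at hi; exact Or.inr ⟨j, hi⟩
      · rw [Fin.snoc_last] at hi; exact Or.inl hi.symm
    · rintro (rfl | ⟨j, hj⟩)
      · exact ⟨Fin.last L, Fin.snoc_last _ _⟩
      · exact ⟨Fin.castSucc j, by rw [Fin.snoc_castSucc]; exact hj⟩
  constructor
  · intro hs
    by_cases hv : v ∈ Set.range g
    · left
      intro y
      rcases (key y).1 (hs y) with rfl | hy
      · exact hv
      · exact hy
    · right
      refine ⟨hv, fun y hy => ?_⟩
      rcases (key y).1 (hs y) with rfl | h
      · exact absurd rfl hy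
      · exact h
  · intro hs y
    refine (key y).2 ?_
    rcases eq_or_ne y v with rfl | hy
    · exact Or.inl rfl
    · rcases hs with hs | hs
      · exact Or.inr (hs y)
      · exact Or.inr (hs.2 y hy)


noncomputable def E3 {L m : ℕ} (v : Fin (m + 1)) :
    {g : Fin L → Fin (m + 1) // v ∉ Set.range g ∧ ∀ y, y ≠ v → y ∈ Set.range g} ≃
      {g' : Fin L → Fin m // Surjective g'} where
  toFun := fun ⟨g, hg⟩ =>
    ⟨fun i => ((finSuccEquiv' v) (g i)).get (by
        rw [← Option.ne_none_iff_isSome]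
        intro hnone
        apply hg.1
        refine ⟨i, ?_⟩
        have := congrArg (finSuccEquiv' v).symm hnone
        simpa [finSuccEquiv'_symm_none] using this), by
      intro j
      have hne : (finSuccEquiv' v).symm (some j) ≠ v := by
        intro hEq
        have := congrArg (finSuccEquiv' v) hEq
        simp [finSuccEquiv'_at] at this
      obtain ⟨i, hi⟩ := hg.2 _ hne
      refine ⟨i, ?_⟩
      have : (finSuccEquiv' v) (g i) = some j := by
        rw [hi]; simp
      simp [this]⟩
  invFun := fun ⟨g', hg'⟩ =>
    ⟨fun i => (finSuccEquiv' v).symm (some (g' i)), by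
      constructor
      · rintro ⟨i, hi⟩
        have := congrArg (finSuccEquiv' v) hi
        simp [finSuccEquiv'_at] at this
      · intro y hy
        have hysome : (finSuccEquiv' v) y ≠ none := by
          intro hnone
          apply hy
          have := congrArg (finSuccEquiv' v).symm hnone
          simpa [finSuccEquiv'_symm_none] using this
        obtain ⟨j, hj⟩ := Option.ne_none_iff_exists'.1 hysome
        obtain ⟨i, hi⟩ := hg' j
        refine ⟨i, ?_⟩
        show (finSuccEquiv' v).symm (some (g' i)) = y
        rw [hi, ← hj]
        simp⟩
  left_inv := by
    rintro ⟨g, hg⟩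
    ext i
    simp
  right_inv := by
    rintro ⟨g', hg'⟩
    ext i
    simp

noncomputable def E1 {L m : ℕ} :
    {f : Fin (L + 1) → Fin (m + 1) // Surjective f} ≃
      Σ v : Fin (m + 1), {g : Fin L → Fin (m + 1) //
        Surjective (Fin.snoc g v : Fin (L + 1) → Fin (m + 1))} where
  toFun := fun ⟨f, hf⟩ => ⟨f (Fin.last L), ⟨Fin.init f, by
    rw [Fin.snoc_init_self]; exact hf⟩⟩
  invFun := fun ⟨v, g, hg⟩ => ⟨Fin.snoc g v, hg⟩
  left_inv := by rintro ⟨f, hf⟩; simp [Fin.snoc_init_self]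
  right_inv := by
    rintro ⟨v, g, hg⟩
    dsimp only
    have hv : (Fin.snoc g v : Fin (L + 1) → Fin (m + 1)) (Fin.last L) = v :=
      Fin.snoc_last _ _
    refine Sigma.ext hv ?_
    rw [Subtype.heq_iff_coe_eq]
    · dsimp only; exact Fin.init_snoc ..
    · intro x; dsimp only; rw [hv]

noncomputable def E2 {L m : ℕ} (v : Fin (m + 1)) :
    {g : Fin L → Fin (m + 1) // Surjective (Fin.snoc g v : Fin (L + 1) → Fin (m + 1))} ≃
      {g : Fin L → Fin (m + 1) // Surjective g} ⊕ {g' : Fin L → Fin m // Surjective g'} :=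
  ((Equiv.subtypeEquivRight fun g => surj_snoc_iff g v).trans
    (subtypeOrEquiv _ _ (by
      rw [disjoint_iff_inf_le]
      intro g
      rintro ⟨hs, hv, -⟩
      exact (hv (hs v)).elim))).trans (Equiv.sumCongr (Equiv.refl _) (E3 v))

lemma Nsurj_succ (L m : ℕ) :
    Nsurj (L + 1) (m + 1) = (m + 1) * (Nsurj L (m + 1) + Nsurj L m) := by
  rw [Nsurj, Fintype.card_congr E1, Fintype.card_sigma]
  have h : ∀ v : Fin (m + 1), Fintype.card {g : Fin L → Fin (m + 1) //
      Surjective (Fin.snoc g v : Fin (L + 1) → Fin (m + 1))} = Nsurj L (m + 1) + Nsurj L m := by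
    intro v
    rw [Fintype.card_congr (E2 v), Fintype.card_sum]
    rfl
  simp [h]

lemma key_sum (L : ℕ) (hL : 2 ≤ L) :
    ∑ l ∈ Icc 1 L, ((-1 : ℚ) ^ (l - 1) / l) * (Nsurj L l : ℚ) = 0 := by
  obtain ⟨M, rfl⟩ : ∃ M, L = M + 1 := ⟨L - 1, by omega⟩
  have hM : 1 ≤ M := by omega
  rw [← Finset.Ico_add_one_right_eq_Icc, Finset.sum_Ico_eq_sum_range]
  have hlen : M + 1 + 1 - 1 = M + 1 := by omega
  rw [hlen]
  have step : ∀ k : ℕ, ((-1 : ℚ) ^ (1 + k - 1) / ((1 + k : ℕ) : ℚ)) * (Nsurj (M + 1) (1 + k) : ℚ)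
      = (-1 : ℚ) ^ k * (Nsurj M (k + 1) : ℚ) + (-1 : ℚ) ^ k * (Nsurj M k : ℚ) := by
    intro k
    have h1 : 1 + k = k + 1 := by omega
    rw [h1, Nat.add_sub_cancel, Nsurj_succ]
    have hk : ((k : ℚ) + 1) ≠ 0 := by positivity
    push_cast
    field_simp
  rw [Finset.sum_congr rfl fun k _ => step k]
  rw [Finset.sum_add_distrib]
  rw [Finset.sum_range_succ, Nsurj_gt (by omega), Finset.sum_range_succ',
    Nsurj_zero_right M hM]
  have hneg : ∀ k : ℕ, (-1 : ℚ) ^ (k + 1) * (Nsurj M (k + 1) : ℚ)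
      = -((-1 : ℚ) ^ k * (Nsurj M (k + 1) : ℚ)) := by intro k; ring
  rw [Finset.sum_congr rfl fun k _ => hneg k, Finset.sum_neg_distrib]
  push_cast
  ring

lemma card_partitions (L l : ℕ) :
    ((Finset.univ : Finset (Fin l → Finset (Fin L))).filter
        (fun P => (∀ s, P s ≠ ∅) ∧ (∀ s t, s ≠ t → Disjoint (P s) (P t)) ∧
          Finset.univ.biUnion P = Finset.univ)).card = Nsurj L l := by
  rw [Nsurj, Fintype.card_subtype]
  have hex : ∀ P : Fin l → Finset (Fin L),
      P ∈ ((Finset.univ : Finset (Fin l → Finset (Fin L))).filter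
        (fun P => (∀ s, P s ≠ ∅) ∧ (∀ s t, s ≠ t → Disjoint (P s) (P t)) ∧
          Finset.univ.biUnion P = Finset.univ)) →
      ∀ α : Fin L, ∃! s, s ∈ (Finset.univ : Finset (Fin l)) ∧ α ∈ P s := by
    intro P hP α
    simp only [mem_filter, mem_univ, true_and] at hP
    obtain ⟨hne, hdis, hcov⟩ := hP
    have hα : α ∈ Finset.univ.biUnion P := by rw [hcov]; exact mem_univ α
    obtain ⟨s, -, hs⟩ := Finset.mem_biUnion.1 hα
    refine ⟨s, ⟨mem_univ s, hs⟩, ?_⟩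
    rintro t ⟨-, ht⟩
    by_contra hst
    exact (Finset.disjoint_left.1 (hdis t s hst) ht) hs
  have hfib : ∀ f : Fin L → Fin l, f ∈ Finset.univ.filter (fun f => Surjective f) →
      (fun s => Finset.univ.filter (fun α => f α = s)) ∈
        ((Finset.univ : Finset (Fin l → Finset (Fin L))).filter
        (fun P => (∀ s, P s ≠ ∅) ∧ (∀ s t, s ≠ t → Disjoint (P s) (P t)) ∧
          Finset.univ.biUnion P = Finset.univ)) := by
    intro f hf
    simp only [mem_filter, mem_univ, true_and] at hf ⊢
    refine ⟨fun s => ?_, fun s t hst => ?_, ?_⟩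
    · obtain ⟨α, hα⟩ := hf s
      exact Finset.nonempty_iff_ne_empty.1 ⟨α, by simp [hα]⟩
    · rw [Finset.disjoint_left]
      intro α hαs hαt
      simp only [mem_filter] at hαs hαt
      exact hst (hαs.2 ▸ hαt.2 ▸ rfl)
    · ext α
      simp only [Finset.mem_biUnion, mem_univ, iff_true, mem_filter, true_and]
      exact ⟨f α, rfl⟩
  refine Finset.card_bij'
    (fun P hP => fun α => Finset.choose (fun s => α ∈ P s) Finset.univ (hex P hP α))
    (fun f _ => fun s => Finset.univ.filter (fun α => f α = s)) ?_ hfib ?_ ?_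
  · intro P hP
    have hP' := hP
    simp only [mem_filter, mem_univ, true_and] at hP'
    simp only [mem_filter, mem_univ, true_and]
    intro s
    obtain ⟨α, hα⟩ := Finset.nonempty_iff_ne_empty.2 (hP'.1 s)
    exact ⟨α, ((hex P hP α).unique (Finset.choose_spec _ _ _) ⟨mem_univ s, hα⟩)⟩
  · intro P hP
    funext s
    ext α
    simp only [mem_filter, mem_univ, true_and]
    constructor
    · rintro rfl
      exact Finset.choose_property (fun s => α ∈ P s) Finset.univ (hex P hP α)
    · intro hα
      exact (hex P hP α).unique (Finset.choose_spec _ _ _) ⟨mem_univ _, hα⟩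
  · intro f hf
    funext α
    have h2 := Finset.choose_property
      (fun s => α ∈ Finset.univ.filter (fun β => f β = s)) Finset.univ
      (hex _ (hfib f hf) α)
    exact ((Finset.mem_filter.1 h2).2).symm

open scoped Classical in
theorem stmt11 {R : Type*} [CommRing R] [Algebra ℚ R] (L : ℕ) (hL : 2 ≤ L)
    (H : Finset (Fin L) → R) (h : Fin L → R)
    (hmul : ∀ I : Finset (Fin L), I ≠ ∅ → H I = ∏ α ∈ I, h α) :
    ∑ l ∈ Finset.Icc 1 L, (((-1 : ℚ) ^ (l - 1) / l) •
      ∑ P ∈ (Finset.univ : Finset (Fin l → Finset (Fin L))).filter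
          (fun P => (∀ s, P s ≠ ∅) ∧ (∀ s t, s ≠ t → Disjoint (P s) (P t)) ∧
            Finset.univ.biUnion P = Finset.univ),
        ∏ s, H (P s)) = 0 := by
  have hconst : ∀ l : ℕ, ∀ P ∈ ((Finset.univ : Finset (Fin l → Finset (Fin L))).filter
      (fun P => (∀ s, P s ≠ ∅) ∧ (∀ s t, s ≠ t → Disjoint (P s) (P t)) ∧
        Finset.univ.biUnion P = Finset.univ)),
      ∏ s, H (P s) = ∏ α, h α := by
    intro l P hP
    simp only [Finset.mem_filter, Finset.mem_univ, true_and] at hP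
    obtain ⟨hne, hdis, hcov⟩ := hP
    rw [Finset.prod_congr rfl fun s _ => hmul _ (hne s)]
    rw [← Finset.prod_biUnion (fun s _ t _ hst => hdis s t hst)]
    rw [hcov]
  have hterm : ∀ l ∈ Finset.Icc 1 L,
      (((-1 : ℚ) ^ (l - 1) / l) •
        ∑ P ∈ (Finset.univ : Finset (Fin l → Finset (Fin L))).filter
            (fun P => (∀ s, P s ≠ ∅) ∧ (∀ s t, s ≠ t → Disjoint (P s) (P t)) ∧
              Finset.univ.biUnion P = Finset.univ),
          ∏ s, H (P s))
        = (((-1 : ℚ) ^ (l - 1) / l) * (Nsurj L l : ℚ)) • ∏ α, h α := by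
    intro l _
    rw [Finset.sum_congr rfl (hconst l), Finset.sum_const,
      ← Nat.cast_smul_eq_nsmul ℚ, card_partitions, smul_smul]
  rw [Finset.sum_congr rfl hterm, ← Finset.sum_smul, key_sum L hL, zero_smul]
end

section
/- For every integer m ≥ 2, ∑_{n=2}^{m} ((-1)^n / n) · n! · S(m,n) = 1, where S(m,n) is the Stirling number of the second kind; equivalently ∑_{n=2}^{m} (-1)^n (n-1)! S(m,n) = 1. -/
/-!
Write `g m n = (-1)^n n! S(m, n)`. The recurrence `S(m+1, n+1) = (n+1) S(m, n+1) + S(m, n)` makes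
`(-1)^(n+1) n! S(m+1, n+1) = g m (n+1) - g m n`, so `∑_{n=1}^{m+1} (-1)^n (n-1)! S(m+1, n)`
telescopes to `g m (m+1) - g m 0 = 0` for `m ≥ 1`. The term `n = 1` is `-S(m+1, 1) = -1`,
so the terms with `n ≥ 2` sum to `1`.
-/

/-- Stirling numbers of the second kind, via the recurrence
`S(m+1, n+1) = (n+1) · S(m, n+1) + S(m, n)`. -/
def stirling2 : ℕ → ℕ → ℕ
  | 0, 0 => 1
  | 0, _ + 1 => 0
  | _ + 1, 0 => 0
  | m + 1, n + 1 => (n + 1) * stirling2 m (n + 1) + stirling2 m n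

open Finset

theorem stirling2_eq_stirlingSecond : stirling2 = Nat.stirlingSecond := by
  funext m n
  induction m generalizing n with
  | zero => cases n <;> rfl
  | succ m ih =>
    cases n with
    | zero => rfl
    | succ n => rw [stirling2, Nat.stirlingSecond_succ_succ, ih, ih]

namespace Nat

variable {R : Type*} [CommRing R]

theorem neg_one_pow_mul_factorial_mul_stirlingSecond_succ_succ (m n : ℕ) :
    (-1 : R) ^ (n + 1) * n ! * stirlingSecond (m + 1) (n + 1) =
      (-1) ^ (n + 1) * (n + 1)! * stirlingSecond m (n + 1) -
        (-1) ^ n * n ! * stirlingSecond m n := by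
  rw [stirlingSecond_succ_succ, factorial_succ]
  push_cast
  ring

theorem sum_range_neg_one_pow_mul_factorial_mul_stirlingSecond_succ {m : ℕ} (hm : m ≠ 0) :
    ∑ n ∈ range (m + 1), (-1 : R) ^ (n + 1) * n ! * stirlingSecond (m + 1) (n + 1) = 0 := by
  obtain ⟨k, rfl⟩ := exists_eq_succ_of_ne_zero hm
  simp only [neg_one_pow_mul_factorial_mul_stirlingSecond_succ_succ]
  rw [sum_range_sub (fun n ↦ (-1 : R) ^ n * n ! * stirlingSecond (k + 1) n),
    stirlingSecond_eq_zero_of_lt (lt_add_one _), stirlingSecond_succ_zero]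
  simp

theorem sum_Icc_two_neg_one_pow_mul_factorial_pred_mul_stirlingSecond {m : ℕ} (hm : 2 ≤ m) :
    ∑ n ∈ Icc 2 m, (-1 : R) ^ n * (n - 1)! * stirlingSecond m n = 1 := by
  obtain ⟨k, rfl⟩ : ∃ k, m = k + 2 := ⟨m - 2, by omega⟩
  have h := sum_range_neg_one_pow_mul_factorial_mul_stirlingSecond_succ (R := R)
    (m := k + 1) (succ_ne_zero k)
  rw [sum_range_succ', stirlingSecond_one_right] at h
  rw [← Ico_add_one_right_eq_Icc, sum_Ico_eq_sum_range, show k + 2 + 1 - 2 = k + 1 by omega]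
  convert eq_neg_of_add_eq_zero_left h using 1
  · refine sum_congr rfl fun n _ ↦ ?_
    rw [show 2 + n = n + 1 + 1 by omega, show n + 1 + 1 - 1 = n + 1 by omega]
  · simp

end Nat

theorem stmt14 (m : ℕ) (hm : 2 ≤ m) :
    (∑ n ∈ Finset.Icc 2 m, ((-1 : ℚ) ^ n / n) * (n.factorial : ℚ) * (stirling2 m n : ℚ) = 1)
      ∧
    (∑ n ∈ Finset.Icc 2 m, ((-1 : ℤ) ^ n) * ((n - 1).factorial : ℤ) * (stirling2 m n : ℤ)
      = 1) := by
  rw [stirling2_eq_stirlingSecond]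
  refine ⟨?_, Nat.sum_Icc_two_neg_one_pow_mul_factorial_pred_mul_stirlingSecond hm⟩
  refine (sum_congr rfl fun n hn ↦ ?_).trans
    (Nat.sum_Icc_two_neg_one_pow_mul_factorial_pred_mul_stirlingSecond hm)
  have hn0 : n ≠ 0 := by grind
  rw [← Nat.mul_factorial_pred hn0]
  push_cast
  field_simp
end
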